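/- Let Δ be a symmetric negative definite d×d real matrix and let λ > 0. Then for every symmetric positive semidefinite d×d matrix B, tr(B²Δ) + 2λ·tr(B) ≤ −λ²·tr(Δ⁻¹), with equality if and only if B = −λΔ⁻¹. In particular, the supremum of tr(B²Δ) + 2λ·tr(B) over all symmetric positive semidefinite B equals −λ²·tr(Δ⁻¹) and is attained at the unique maximizer B = −λΔ⁻¹. -/

import Mathlib

open MeasureTheory Matrix
open scoped ENNReal NNReal RealInnerProductSpace Matrix.Norms.L2Operator

noncomputable section

def IsCoupling {α β : Type*} [MeasurableSpace α] [MeasurableSpace β]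
    (π : Measure (α × β)) (P : Measure α) (Q : Measure β) : Prop :=
  π.fst = P ∧ π.snd = Q

noncomputable def W2sq {E : Type*} [SubtractionMonoid E] [MeasurableSpace E]
    (c : E → ℝ) (P Q : Measure E) : ℝ≥0∞ :=
  ⨅ π ∈ {π : Measure (E × E) | IsCoupling π P Q},
    ∫⁻ ξ, ENNReal.ofReal ((c (ξ.1 - ξ.2)) ^ 2) ∂π

def FiniteSecondMoment {E : Type*} [NormedAddCommGroup E] [MeasurableSpace E]
    (P : Measure E) : Prop :=
  Integrable (fun x => ‖x‖ ^ 2) P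

def ambiguitySet {E : Type*} [NormedAddCommGroup E] [MeasurableSpace E]
    (c : E → ℝ) (ε : ℝ) (P : Measure E) : Set (Measure E) :=
  {Q | IsProbabilityMeasure Q ∧ FiniteSecondMoment Q ∧ W2sq c Q P ≤ ENNReal.ofReal (ε ^ 2)}

noncomputable def mulVecMap {m d : ℕ} (A : Matrix (Fin m) (Fin d) ℝ) :
    EuclideanSpace ℝ (Fin d) → EuclideanSpace ℝ (Fin m) :=
  fun x => (EuclideanSpace.equiv (Fin m) ℝ).symm (A.mulVec ((EuclideanSpace.equiv (Fin d) ℝ) x))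

noncomputable def meanVec {d : ℕ} (P : Measure (EuclideanSpace ℝ (Fin d))) :
    EuclideanSpace ℝ (Fin d) :=
  ∫ x, x ∂P

noncomputable def covMatrix {d : ℕ} (P : Measure (EuclideanSpace ℝ (Fin d))) :
    Matrix (Fin d) (Fin d) ℝ :=
  Matrix.of fun i j => ∫ x, (x i - meanVec P i) * (x j - meanVec P j) ∂P

open scoped Classical in
noncomputable def psdSqrt {d : ℕ} (M : Matrix (Fin d) (Fin d) ℝ) : Matrix (Fin d) (Fin d) ℝ :=
  if h : M.PosSemidef then
    h.1.eigenvectorUnitary.1 * diagonal (Real.sqrt ∘ h.1.eigenvalues) *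
      (star h.1.eigenvectorUnitary : Matrix (Fin d) (Fin d) ℝ)
  else 0

noncomputable def gelbrichSq {d : ℕ} (μ1 : EuclideanSpace ℝ (Fin d))
    (S1 : Matrix (Fin d) (Fin d) ℝ) (μ2 : EuclideanSpace ℝ (Fin d))
    (S2 : Matrix (Fin d) (Fin d) ℝ) : ℝ :=
  ‖μ1 - μ2‖ ^ 2 + (S1 + S2 - (2 : ℝ) • psdSqrt (psdSqrt S1 * S2 * psdSqrt S1)).trace

noncomputable def CVaR {E : Type*} [MeasurableSpace E] (γ : ℝ) (P : Measure E) (f : E → ℝ) : ℝ :=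
  ⨅ τ : ℝ, τ + (1 / γ) * ∫ x, max (f x - τ) 0 ∂P

/-! Completing the square: with `C = B + λΔ⁻¹`, which is symmetric,
`tr(B²Δ) + 2λ tr B + λ² tr Δ⁻¹ = tr(CΔC) = -tr(Cᵀ(-Δ)C)`, and since `-Δ` is positive definite,
`tr(Cᵀ(-Δ)C)` is nonnegative and vanishes only for `C = 0`. -/

namespace Matrix

variable {n m 𝕜 : Type*} [Fintype n] [Fintype m]

open scoped ComplexOrder

theorem PosDef.trace_conjTranspose_mul_mul_same_eq_zero_iff [RCLike 𝕜] {M : Matrix n n 𝕜}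
    (hM : M.PosDef) (C : Matrix n m 𝕜) : (Cᴴ * M * C).trace = 0 ↔ C = 0 := by
  classical
  refine ⟨fun h ↦ ?_, fun h ↦ by simp [h]⟩
  have hzero : Cᴴ * M * C = 0 :=
    (hM.posSemidef.conjTranspose_mul_mul_same C).trace_eq_zero_iff.mp h
  refine ext_of_mulVec_single fun j ↦ ?_
  rw [zero_mulVec]
  by_contra hne
  have hpos := hM.dotProduct_mulVec_pos hne
  rw [star_mulVec, ← dotProduct_mulVec, mulVec_mulVec, mulVec_mulVec, hzero] at hpos
  simp at hpos

theorem trace_add_smul_inv_mul_mul_add_smul_inv [CommRing 𝕜] [DecidableEq n]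
    {Δ : Matrix n n 𝕜} (hΔ : IsUnit Δ.det) (B : Matrix n n 𝕜) (c : 𝕜) :
    ((B + c • Δ⁻¹) * Δ * (B + c • Δ⁻¹)).trace =
      (B * B * Δ).trace + 2 * c * B.trace + c ^ 2 * Δ⁻¹.trace := by
  have hexpand : (B + c • Δ⁻¹) * Δ * (B + c • Δ⁻¹) =
      B * Δ * B + (2 * c) • B + c ^ 2 • Δ⁻¹ := by
    simp only [add_mul, mul_add, smul_mul_assoc, mul_smul_comm, Matrix.mul_assoc,
      nonsing_inv_mul _ hΔ, mul_nonsing_inv _ hΔ, Matrix.mul_one, Matrix.one_mul]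
    module
  rw [hexpand, trace_add, trace_add, trace_smul, trace_smul, trace_mul_cycle, smul_eq_mul,
    smul_eq_mul]

end Matrix

theorem stmt7_general {d : ℕ} (Δ : Matrix (Fin d) (Fin d) ℝ) (hΔ : (-Δ).PosDef)
    (lam : ℝ) :
    ∀ B : Matrix (Fin d) (Fin d) ℝ, B.PosSemidef →
      (B * B * Δ).trace + 2 * lam * B.trace ≤ -(lam ^ 2) * Δ⁻¹.trace ∧
      ((B * B * Δ).trace + 2 * lam * B.trace = -(lam ^ 2) * Δ⁻¹.trace ↔
        B = -(lam • Δ⁻¹)) := by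
  intro B hB
  have hdet : IsUnit Δ.det := (isUnit_iff_isUnit_det Δ).mp (by simpa using hΔ.isUnit.neg)
  have hΔherm : Δ.IsHermitian := by simpa using hΔ.isHermitian.neg
  set C := B + lam • Δ⁻¹
  have hC : Cᴴ = C := (hB.isHermitian.add (hΔherm.inv.smul (.all lam))).eq
  have hgap : (Cᴴ * -Δ * C).trace =
      -(lam ^ 2) * Δ⁻¹.trace - ((B * B * Δ).trace + 2 * lam * B.trace) := by
    rw [hC, Matrix.mul_neg, Matrix.neg_mul, trace_neg,
      trace_add_smul_inv_mul_mul_add_smul_inv hdet]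
    ring
  have hnonneg := (hΔ.posSemidef.conjTranspose_mul_mul_same C).trace_nonneg
  refine ⟨by linarith, ?_⟩
  rw [← sub_eq_zero, ← neg_eq_zero, neg_sub, ← hgap,
    hΔ.trace_conjTranspose_mul_mul_same_eq_zero_iff C, add_eq_zero_iff_eq_neg]

theorem stmt7 {d : ℕ} (Δ : Matrix (Fin d) (Fin d) ℝ) (hΔ : (-Δ).PosDef)
    (lam : ℝ) (hlam : 0 < lam) :
    ∀ B : Matrix (Fin d) (Fin d) ℝ, B.PosSemidef →
      (B * B * Δ).trace + 2 * lam * B.trace ≤ -(lam ^ 2) * Δ⁻¹.trace ∧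
      ((B * B * Δ).trace + 2 * lam * B.trace = -(lam ^ 2) * Δ⁻¹.trace ↔
        B = -(lam • Δ⁻¹)) :=
  stmt7_general Δ hΔ lam

end
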